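/- arXiv:1710.09066 — 2 statements merged into one kernel-verified Lean document; each statement's English description precedes it below -/
import Mathlib

section
/- Let Γ be a subgroup of E(n), Γ* a finite-index normal subgroup, and suppose every element (h,b) ∈ Γ* has b⊥ = 0, where b⊥ is the orthogonal projection onto a subspace V⊥ invariant under all ψ(Γ). Then there exists a constant C such that ‖a⊥‖ ≤ C for all (g,a) ∈ Γ. -/
/-!
Split `Γ` into the finitely many left cosets of `Γ*`. If `γ ∈ Γ` and `η ∈ Γ*`, then
`(γη)(0) = ψ(γ)(η 0) + γ 0`, and `ψ(γ)(η 0)` lies in `W⊥` because `η 0 ∈ W⊥` and the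
orthogonal map `ψ(γ)` preserves `W`, hence also `W⊥`. So the `W`-component of the translation
part is constant on each coset, and it takes only finitely many values.
-/

theorem Subgroup.bddAbove_range_of_mul_mem_eq {G α : Type*} [Group G] [Preorder α]
    [IsDirectedOrder α] [Nonempty α] (H : Subgroup G) [H.FiniteIndex] (f : G → α)
    (hf : ∀ g, ∀ h ∈ H, f (g * h) = f g) : BddAbove (Set.range f) := by
  refine ((Set.finite_range fun q : G ⧸ H => f q.out).subset ?_).bddAbove
  rintro _ ⟨g, rfl⟩
  have hmem : (QuotientGroup.mk g : G ⧸ H).out⁻¹ * g ∈ H :=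
    QuotientGroup.eq.mp (QuotientGroup.out_eq' _)
  exact ⟨QuotientGroup.mk g, by simpa using (hf (QuotientGroup.mk g : G ⧸ H).out _ hmem).symm⟩

section

variable {E : Type*} [NormedAddCommGroup E] [InnerProductSpace ℝ E] [FiniteDimensional ℝ E]
  {W : Submodule ℝ E}

theorem LinearIsometryEquiv.mem_orthogonal_of_mapsTo (L : E ≃ₗᵢ[ℝ] E)
    (hW : ∀ w ∈ W, L w ∈ W) {x : E} (hx : x ∈ Wᗮ) : L x ∈ Wᗮ := by
  have hmap : W.map (L.toLinearEquiv : E →ₗ[ℝ] E) = W :=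
    Submodule.eq_of_le_of_finrank_le (Submodule.map_le_iff_le_comap.mpr hW)
      (LinearEquiv.finrank_map_eq _ _).ge
  rw [← hmap, ← Submodule.map_orthogonal_equiv]
  exact Submodule.mem_map_of_mem hx

theorem IsometryEquiv.orthogonalProjectionOnto_mul_apply_zero {γ η : E ≃ᵢ E}
    (hγ : ∀ w ∈ W, γ w - γ 0 ∈ W) (hη : η 0 ∈ Wᗮ) :
    W.orthogonalProjectionOnto ((γ * η) 0) = W.orthogonalProjectionOnto (γ 0) := by
  have hlin : γ.toRealLinearIsometryEquiv (η 0) ∈ Wᗮ :=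
    γ.toRealLinearIsometryEquiv.mem_orthogonal_of_mapsTo
      (fun w hw => by simpa using hγ w hw) hη
  have hsplit : (γ * η) 0 = γ.toRealLinearIsometryEquiv (η 0) + γ 0 := by
    simp [IsometryEquiv.toRealLinearIsometryEquiv_apply]
  rw [hsplit, map_add, Submodule.orthogonalProjectionOnto_eq_zero_iff.mpr hlin, zero_add]

end

theorem translation_part_perp_bounded_general (n : ℕ)
    (Γ Γs : Subgroup (EuclideanSpace ℝ (Fin n) ≃ᵢ EuclideanSpace ℝ (Fin n)))
    (hfi : (Γs.subgroupOf Γ).FiniteIndex)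
    (W : Submodule ℝ (EuclideanSpace ℝ (Fin n)))
    (hWinv : ∀ γ ∈ Γ, ∀ w ∈ W, γ w - γ 0 ∈ W)
    (hperp : ∀ γ ∈ Γs, (W.orthogonalProjection (γ 0) : EuclideanSpace ℝ (Fin n)) = 0) :
    ∃ C : ℝ, ∀ γ ∈ Γ, ‖(W.orthogonalProjection (γ 0) : EuclideanSpace ℝ (Fin n))‖ ≤ C := by
  have hcoset : ∀ γ : Γ, ∀ η ∈ Γs.subgroupOf Γ,
      W.orthogonalProjectionOnto ((γ * η : Γ).1 0) = W.orthogonalProjectionOnto (γ.1 0) :=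
    fun γ η hη =>
    IsometryEquiv.orthogonalProjectionOnto_mul_apply_zero (hWinv γ γ.2)
      (Submodule.orthogonalProjectionOnto_eq_zero_iff.mp
        (Submodule.coe_eq_zero.mp (hperp η (Subgroup.mem_subgroupOf.mp hη))))
  obtain ⟨C, hC⟩ := (Γs.subgroupOf Γ).bddAbove_range_of_mul_mem_eq
    (fun γ : Γ => ‖(W.orthogonalProjectionOnto (γ.1 0) : EuclideanSpace ℝ (Fin n))‖)
    fun γ η hη => by simp only [hcoset γ η hη]
  exact ⟨C, fun γ hγ => hC ⟨⟨γ, hγ⟩, rfl⟩⟩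

/-- Let `Γ` be a subgroup of `E(n)` (the isometry group of `ℝⁿ`), `Γ*` a
finite-index normal subgroup, and suppose every element of `Γ*` has vanishing
`V⊥`-component of its translation part (the translation part of `γ` is `γ 0`, and the
`V⊥`-component is the orthogonal projection onto the subspace `W = V⊥`), where `W` is
invariant under the rotational parts of all elements of `Γ`.  Then there is a constant
`C` with `‖a⊥‖ ≤ C` for all `(g,a) ∈ Γ`. -/
theorem translation_part_perp_bounded (n : ℕ)
    (Γ Γs : Subgroup (EuclideanSpace ℝ (Fin n) ≃ᵢ EuclideanSpace ℝ (Fin n)))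
    (hle : Γs ≤ Γ)
    (hnorm : (Γs.subgroupOf Γ).Normal) (hfi : (Γs.subgroupOf Γ).FiniteIndex)
    (W : Submodule ℝ (EuclideanSpace ℝ (Fin n)))
    (hWinv : ∀ γ ∈ Γ, ∀ w ∈ W, γ w - γ 0 ∈ W)
    (hperp : ∀ γ ∈ Γs, (W.orthogonalProjection (γ 0) : EuclideanSpace ℝ (Fin n)) = 0) :
    ∃ C : ℝ, ∀ γ ∈ Γ, ‖(W.orthogonalProjection (γ 0) : EuclideanSpace ℝ (Fin n))‖ ≤ C :=
  translation_part_perp_bounded_general n Γ Γs hfi W hWinv hperp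
end

section
/- Let Γ₁ ≤ E(n) and Γ** = Γ* ∩ Γ₁ where Γ** is a translation subgroup acting only on a subspace V (i.e. its translation vectors lie in V) and Γ** has finite index N in Γ₁. Then for every (g,a) ∈ Γ₁, the component a⊥ of a in V⊥ is zero. -/
/-! The rotational part of every `γ ∈ Γ₁` fixes `Vᗮ` pointwise, hence preserves `V`, so the
`Vᗮ`-component of `γ x` is that of `x` shifted by `a⊥`, the `Vᗮ`-component of `γ 0`. Iterating,
`(γ ^ k) 0` has `Vᗮ`-component `k • a⊥`. Since `Γ**` has finite index in `Γ₁`, some power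
`γ ^ k` with `k > 0` lies in `Γ**`, so `(γ ^ k) 0 ∈ V` and `k • a⊥ = 0`. -/

open Submodule

variable {E : Type*} [NormedAddCommGroup E] [InnerProductSpace ℝ E] (K : Submodule ℝ E)

theorem LinearIsometryEquiv.mem_orthogonal_of_forall_mem_eq (L : E ≃ₗᵢ[ℝ] E)
    (hL : ∀ w ∈ K, L w = w) {v : E} (hv : v ∈ Kᗮ) : L v ∈ Kᗮ := by
  intro w hw
  rw [← hL w hw, L.inner_map_map]
  exact hv w hw

theorem LinearIsometryEquiv.orthogonalProjectionOnto_map_of_forall_mem_eq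
    [K.HasOrthogonalProjection] (L : E ≃ₗᵢ[ℝ] E) (hL : ∀ w ∈ K, L w = w) (x : E) :
    K.orthogonalProjectionOnto (L x) = K.orthogonalProjectionOnto x := by
  have hperp : L (x - K.orthogonalProjectionOnto x) ∈ Kᗮ :=
    L.mem_orthogonal_of_forall_mem_eq K hL (K.sub_starProjection_mem_orthogonal x)
  have hsplit : L x = K.orthogonalProjectionOnto x + L (x - K.orthogonalProjectionOnto x) := by
    rw [map_sub, hL _ (coe_mem _), add_sub_cancel]
  rw [hsplit, ContinuousLinearMap.map_add, orthogonalProjectionOnto_mem_subspace_eq_self,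
    orthogonalProjectionOnto_eq_zero_iff.mpr hperp, add_zero]

theorem IsometryEquiv.orthogonalProjectionOnto_apply [K.HasOrthogonalProjection] (γ : E ≃ᵢ E)
    (hγ : ∀ w ∈ K, γ w - γ 0 = w) (x : E) :
    K.orthogonalProjectionOnto (γ x) =
      K.orthogonalProjectionOnto x + K.orthogonalProjectionOnto (γ 0) := by
  have hlin : ∀ y, γ.toRealLinearIsometryEquiv y = γ y - γ 0 := γ.toRealLinearIsometryEquiv_apply
  rw [← sub_add_cancel (γ x) (γ 0), ← hlin, map_add,
    γ.toRealLinearIsometryEquiv.orthogonalProjectionOnto_map_of_forall_mem_eq K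
      (fun w hw ↦ (hlin w).trans (hγ w hw))]

theorem IsometryEquiv.orthogonalProjectionOnto_pow_apply_zero [K.HasOrthogonalProjection]
    (γ : E ≃ᵢ E) (hγ : ∀ w ∈ K, γ w - γ 0 = w) (m : ℕ) :
    K.orthogonalProjectionOnto ((γ ^ m) 0) = m • K.orthogonalProjectionOnto (γ 0) := by
  induction m with
  | zero => simp
  | succ m ih =>
    rw [pow_succ', IsometryEquiv.mul_apply, γ.orthogonalProjectionOnto_apply K hγ, ih, succ_nsmul]

theorem translation_part_perp_zero_general (n : ℕ)
    (V : Submodule ℝ (EuclideanSpace ℝ (Fin n)))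
    (Γ₁ Γss : Subgroup (EuclideanSpace ℝ (Fin n) ≃ᵢ EuclideanSpace ℝ (Fin n)))
    (hΓ₁ : ∀ γ ∈ Γ₁, ∀ w ∈ Vᗮ, γ w - γ 0 = w)
    (htrans : ∀ γ ∈ Γss, (∀ x, γ x = x + γ 0) ∧ γ 0 ∈ V)
    (N : ℕ) (hN : N = (Γss.subgroupOf Γ₁).index) (hN0 : N ≠ 0) :
    ∀ γ ∈ Γ₁, (Submodule.orthogonalProjectionOnto Vᗮ (γ 0) : EuclideanSpace ℝ (Fin n)) = 0 := by
  intro γ hγ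
  obtain ⟨k, hk, -, hγk⟩ := Subgroup.exists_pow_mem_of_relIndex_ne_zero (hN ▸ hN0) hγ
  have hzero : Vᗮ.orthogonalProjectionOnto ((γ ^ k) 0) = 0 :=
    orthogonalProjectionOnto_eq_zero_iff.mpr (V.le_orthogonal_orthogonal (htrans _ hγk.1).2)
  rw [γ.orthogonalProjectionOnto_pow_apply_zero Vᗮ (hΓ₁ γ hγ), ← Nat.cast_smul_eq_nsmul ℝ]
    at hzero
  rw [(smul_eq_zero.mp hzero).resolve_left (Nat.cast_ne_zero.mpr hk.ne'), ZeroMemClass.coe_zero]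

/-- Let `Γ₁ ≤ E(n)` (the isometry group of `ℝⁿ`) with every element having
rotational part equal to the identity on `Vᗮ`, and let `Γ** ≤ Γ₁` be a subgroup of
finite index `N` all of whose elements are pure translations by vectors in `V`.
Then for every `(g,a) ∈ Γ₁` the component `a⊥` of the translation part `a = γ 0`
in `Vᗮ` is zero. -/
theorem translation_part_perp_zero (n : ℕ)
    (V : Submodule ℝ (EuclideanSpace ℝ (Fin n)))
    (Γ₁ Γss : Subgroup (EuclideanSpace ℝ (Fin n) ≃ᵢ EuclideanSpace ℝ (Fin n)))
    (hle : Γss ≤ Γ₁)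
    (hΓ₁ : ∀ γ ∈ Γ₁, ∀ w ∈ Vᗮ, γ w - γ 0 = w)
    (htrans : ∀ γ ∈ Γss, (∀ x, γ x = x + γ 0) ∧ γ 0 ∈ V)
    (N : ℕ) (hN : N = (Γss.subgroupOf Γ₁).index) (hN0 : N ≠ 0) :
    ∀ γ ∈ Γ₁, (Submodule.orthogonalProjectionOnto Vᗮ (γ 0) : EuclideanSpace ℝ (Fin n)) = 0 :=
  translation_part_perp_zero_general n V Γ₁ Γss hΓ₁ htrans N hN hN0
end
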